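/- arXiv:1710.00697 — 3 statements merged into one kernel-verified Lean document; each statement's English description precedes it below -/
import Mathlib

section
/- Let (V, σ) be a finite-dimensional symplectic K-vector space, char K ≠ 2, and let f : V → V be a self-adjoint operator. Write the characteristic polynomial of f as P_f(t) = ∏ᵢ₌₁ʳ Pᵢ(t)^{mᵢ} with P₁, …, Pᵣ monic irreducible pairwise distinct. Then V decomposes as the direct sum V = V₁ ⊕ … ⊕ Vᵣ, where each Vᵢ = ker(Pᵢ(f)^{mᵢ}) is an f-invariant symplectic subspace of V. -/
def sympOrth {K V : Type*} [Field K] [AddCommGroup V] [Module K V]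
    (σ : LinearMap.BilinForm K V) (W : Submodule K V) : Submodule K V where
  carrier := {v | ∀ w ∈ W, σ v w = 0}
  add_mem' := by intro a b ha hb w hw; simp [ha w hw, hb w hw]
  zero_mem' := by intro w hw; simp
  smul_mem' := by intro c a ha w hw; simp [ha w hw]

def IsSymplecticSubspace {K V : Type*} [Field K] [AddCommGroup V] [Module K V]
    (σ : LinearMap.BilinForm K V) (W : Submodule K V) : Prop :=
  ∀ v ∈ W, (∀ w ∈ W, σ v w = 0) → v = 0

/-!
The kernels `Vᵢ = ker Pᵢ(f)^{mᵢ}` give the primary decomposition of `V` because the `Pᵢ^{mᵢ}` are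
pairwise coprime and their product, the characteristic polynomial, kills `f`. Every polynomial in
a self-adjoint `f` is again self-adjoint, so from a Bézout relation `a Pᵢ^{mᵢ} + b Pⱼ^{mⱼ} = 1` one
gets `σ(v, w) = σ(a(f) Pᵢ(f)^{mᵢ} v, w) + σ(v, b(f) Pⱼ(f)^{mⱼ} w) = 0` for `v ∈ Vᵢ`, `w ∈ Vⱼ`,
`i ≠ j`. Hence a vector of `Vᵢ` orthogonal to `Vᵢ` is orthogonal to all of `V = ⨁ Vⱼ` and
vanishes by non-degeneracy.
-/

open Polynomial

open scoped Function

namespace Polynomial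

theorem isCoprime_of_monic_of_irreducible_of_ne {K : Type*} [Field K] {p q : K[X]}
    (hp : p.Monic) (hq : q.Monic) (hp_irr : Irreducible p) (hq_irr : Irreducible q)
    (hpq : p ≠ q) : IsCoprime p q :=
  (hp_irr.coprime_iff_not_dvd).2 fun hdvd =>
    hpq (eq_of_monic_of_associated hp hq (hp_irr.associated_of_dvd hq_irr hdvd))

section KerAeval

variable {R M : Type*} [CommRing R] [AddCommGroup M] [Module R M] (f : Module.End R M)

theorem apply_mem_ker_aeval {p : R[X]} {v : M} (hv : v ∈ LinearMap.ker (aeval f p)) :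
    f v ∈ LinearMap.ker (aeval f p) := by
  have hcomm : Commute f (aeval f p) := by
    simpa only [aeval_X] using (commute_X p).map (aeval f)
  rw [LinearMap.mem_ker, ← Module.End.mul_apply, ← hcomm.eq, Module.End.mul_apply,
    LinearMap.mem_ker.1 hv, map_zero]

variable {ι : Type*} [DecidableEq ι] {q : ι → R[X]}

theorem finset_sup_ker_aeval_eq_ker_aeval_prod {s : Finset ι}
    (hq : (s : Set ι).Pairwise (IsCoprime on q)) :
    s.sup (fun i => LinearMap.ker (aeval f (q i))) = LinearMap.ker (aeval f (∏ i ∈ s, q i)) := by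
  induction s using Finset.induction with
  | empty => simp [Module.End.one_eq_id]
  | @insert a s ha ih =>
    rw [Finset.coe_insert, Set.pairwise_insert_of_notMem (by exact_mod_cast ha)] at hq
    have hcop : IsCoprime (q a) (∏ i ∈ s, q i) :=
      IsCoprime.prod_right fun i hi => (hq.2 i hi).1
    rw [Finset.sup_insert, Finset.prod_insert ha, ih hq.1,
      sup_ker_aeval_eq_ker_aeval_mul_of_coprime f hcop]

theorem iSupIndep_ker_aeval [Fintype ι] (hq : Pairwise (IsCoprime on q)) :
    iSupIndep fun i => LinearMap.ker (aeval f (q i)) := by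
  refine iSupIndep_iff_supIndep_univ.2 <| Finset.supIndep_iff_disjoint_erase.2 fun i _ => ?_
  rw [finset_sup_ker_aeval_eq_ker_aeval_prod f fun j _ k _ hjk => hq hjk]
  exact disjoint_ker_aeval_of_isCoprime f <|
    IsCoprime.prod_right fun j hj => hq (Finset.ne_of_mem_erase hj).symm

theorem isInternal_ker_aeval_of_aeval_prod_eq_zero [Fintype ι] (hq : Pairwise (IsCoprime on q))
    (hf : aeval f (∏ i, q i) = 0) :
    DirectSum.IsInternal fun i => LinearMap.ker (aeval f (q i)) := by
  refine DirectSum.isInternal_submodule_of_iSupIndep_of_iSup_eq_top (iSupIndep_ker_aeval f hq) ?_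
  rw [← Finset.sup_univ_eq_iSup, finset_sup_ker_aeval_eq_ker_aeval_prod f fun j _ k _ hjk => hq hjk,
    hf, LinearMap.ker_zero]

end KerAeval

end Polynomial

namespace LinearMap.IsSelfAdjoint

variable {R M N : Type*} [CommRing R] [AddCommGroup M] [Module R M] [AddCommGroup N] [Module R N]
  {B : M →ₗ[R] M →ₗ[R] N} {f : Module.End R M}

theorem pow (hf : B.IsSelfAdjoint f) (n : ℕ) : B.IsSelfAdjoint ⇑(f ^ n) := by
  induction n with
  | zero => exact isAdjointPair_one
  | succ n ih =>
    have h := ih.mul hf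
    rw [← pow_succ, ← pow_succ'] at h
    exact h

theorem aeval (hf : B.IsSelfAdjoint f) (p : R[X]) : B.IsSelfAdjoint ⇑(aeval f p) := by
  rw [aeval_eq_sum_range]
  exact Submodule.sum_mem (selfAdjointSubmodule B) fun i _ =>
    Submodule.smul_mem _ _ (hf.pow i)

theorem apply_eq_zero_of_isCoprime (hf : B.IsSelfAdjoint f) {p q : R[X]} (hpq : IsCoprime p q)
    {v w : M} (hv : v ∈ LinearMap.ker (Polynomial.aeval f p))
    (hw : w ∈ LinearMap.ker (Polynomial.aeval f q)) : B v w = 0 := by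
  obtain ⟨a, b, hab⟩ := hpq
  have hav : Polynomial.aeval f (a * p) v = 0 := by
    rw [map_mul, Module.End.mul_apply, LinearMap.mem_ker.1 hv, map_zero]
  have hbw : Polynomial.aeval f (b * q) w = 0 := by
    rw [map_mul, Module.End.mul_apply, LinearMap.mem_ker.1 hw, map_zero]
  calc B v w = B v (Polynomial.aeval f (a * p + b * q) w) := by
        rw [hab, map_one, Module.End.one_apply]
    _ = B (Polynomial.aeval f (a * p) v) w + B v (Polynomial.aeval f (b * q) w) := by
      rw [map_add, LinearMap.add_apply, map_add, ← hf.aeval (a * p)]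
    _ = 0 := by rw [hav, hbw, map_zero, map_zero, LinearMap.zero_apply, add_zero]

end LinearMap.IsSelfAdjoint

theorem isSymplecticSubspace_of_iSup_eq_top {K V ι : Type*} [Field K] [AddCommGroup V]
    [Module K V] {σ : LinearMap.BilinForm K V} (hσ : σ.SeparatingLeft) {W : ι → Submodule K V}
    (hW : ⨆ i, W i = ⊤) (horth : Pairwise fun i j => ∀ v ∈ W i, ∀ w ∈ W j, σ v w = 0) (i : ι) :
    IsSymplecticSubspace σ (W i) := by
  intro v hv hvi
  refine hσ v fun u => LinearMap.mem_ker.1 ?_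
  suffices h : ⨆ j, W j ≤ LinearMap.ker (σ v) from h (hW ▸ Submodule.mem_top)
  refine iSup_le fun j w hw => ?_
  obtain rfl | hij := eq_or_ne i j
  · exact hvi w hw
  · exact horth hij v hv w hw

theorem primary_decomposition_symplectic_general
    {K V : Type*} [Field K] [AddCommGroup V] [Module K V] [FiniteDimensional K V]
    (σ : LinearMap.BilinForm K V) (hnd : σ.Nondegenerate)
    (f : Module.End K V) (hsa : ∀ v w, σ v (f w) = σ (f v) w)
    (r : ℕ) (P : Fin r → Polynomial K) (m : Fin r → ℕ)
    (hmonic : ∀ i, (P i).Monic) (hirr : ∀ i, Irreducible (P i))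
    (hne : ∀ i j, i ≠ j → P i ≠ P j)
    (hfact : LinearMap.charpoly f = ∏ i, P i ^ m i) :
    DirectSum.IsInternal (fun i => LinearMap.ker (Polynomial.aeval f (P i ^ m i))) ∧
    (∀ i, ∀ v ∈ LinearMap.ker (Polynomial.aeval f (P i ^ m i)),
        f v ∈ LinearMap.ker (Polynomial.aeval f (P i ^ m i))) ∧
    (∀ i, IsSymplecticSubspace σ (LinearMap.ker (Polynomial.aeval f (P i ^ m i)))) := by
  have hcop : Pairwise (IsCoprime on fun i => P i ^ m i) := fun i j hij =>
    (isCoprime_of_monic_of_irreducible_of_ne (hmonic i) (hmonic j) (hirr i) (hirr j)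
      (hne i j hij)).pow
  have hself : σ.IsSelfAdjoint f := fun v w => (hsa v w).symm
  have hinternal := isInternal_ker_aeval_of_aeval_prod_eq_zero f hcop
    (hfact ▸ LinearMap.aeval_self_charpoly f)
  refine ⟨hinternal, fun i v hv => apply_mem_ker_aeval f hv, ?_⟩
  exact isSymplecticSubspace_of_iSup_eq_top hnd.1 hinternal.submodule_iSup_eq_top
    fun i j hij v hv w hw => hself.apply_eq_zero_of_isCoprime (hcop hij) hv hw

theorem primary_decomposition_symplectic
    {K V : Type*} [Field K] [AddCommGroup V] [Module K V] [FiniteDimensional K V]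
    (hchar : (2 : K) ≠ 0)
    (σ : LinearMap.BilinForm K V) (halt : ∀ v, σ v v = 0) (hnd : σ.Nondegenerate)
    (f : Module.End K V) (hsa : ∀ v w, σ v (f w) = σ (f v) w)
    (r : ℕ) (P : Fin r → Polynomial K) (m : Fin r → ℕ)
    (hmonic : ∀ i, (P i).Monic) (hirr : ∀ i, Irreducible (P i))
    (hne : ∀ i j, i ≠ j → P i ≠ P j) (hm : ∀ i, 0 < m i)
    (hfact : LinearMap.charpoly f = ∏ i, P i ^ m i) :
    DirectSum.IsInternal (fun i => LinearMap.ker (Polynomial.aeval f (P i ^ m i))) ∧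
    (∀ i, ∀ v ∈ LinearMap.ker (Polynomial.aeval f (P i ^ m i)),
        f v ∈ LinearMap.ker (Polynomial.aeval f (P i ^ m i))) ∧
    (∀ i, IsSymplecticSubspace σ (LinearMap.ker (Polynomial.aeval f (P i ^ m i)))) :=
  primary_decomposition_symplectic_general σ hnd f hsa r P m hmonic hirr hne hfact
end

section
/- Let (V, σ) be a finite-dimensional symplectic K-vector space, char K ≠ 2, and f : V → V a nilpotent self-adjoint operator with nilpotency degree d (f^d = 0, f^{d−1} ≠ 0). Then for any f-cyclic subspace U ⊆ V with dim(U) = d, there exists an f-cyclic subspace W ⊆ V with dim(W) = d such that U ∩ W = {0} and U ⊕ W is a symplectic subspace of V. Moreover there is a Darboux basis {u₁,…,u_d, w₁,…,w_d} of U ⊕ W with u's spanning U and w's spanning W, satisfying uᵢ = f^{d−i}(u_d) and wᵢ = f^{i−1}(w₁). -/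
/-!
Choose `w₀` by nondegeneracy so that `σ (w₀, fᵏ u) = δ_{k, d-1}` for `k < d`; self-adjointness moves
powers of `f` across `σ`, so `σ (fⁱ w₀, f^{d-1-j} u) = σ (w₀, f^{i+d-1-j} u) = δ_{ij}`. Every
`f`-orbit is isotropic, since `σ (x, fⁿ x) = σ (fⁿ x, x) = -σ (x, fⁿ x)` and `2 ≠ 0`. Two
isotropic families in duality under `σ` span complementary subspaces on whose sum `σ` is
nondegenerate.
-/

open Module Submodule

theorem LinearMap.IsSelfAdjoint.pow_s9 {R M : Type*} [CommSemiring R] [AddCommMonoid M]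
    [Module R M] {B : LinearMap.BilinForm R M} {f : Module.End R M} (hf : B.IsSelfAdjoint f)
    (n : ℕ) :
    B.IsSelfAdjoint ⇑(f ^ n) := by
  induction n with
  | zero => exact LinearMap.isAdjointPair_one
  | succ n ih =>
    have h := ih.mul hf
    rwa [← pow_succ, ← pow_succ'] at h

theorem Submodule.span_range_pow_apply_eq_span_fin {R M : Type*} [Semiring R] [AddCommMonoid M]
    [Module R M] {f : Module.End R M} {x : M} {d : ℕ} (hx : (f ^ d) x = 0) :
    span R (Set.range fun i : ℕ => (f ^ i) x) =
      span R (Set.range fun i : Fin d => (f ^ (i : ℕ)) x) := by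
  refine le_antisymm (span_le.2 ?_) (span_mono (Set.range_subset_iff.2 fun i => ⟨i, rfl⟩))
  rintro _ ⟨i, rfl⟩
  by_cases hi : i < d
  · exact subset_span ⟨⟨i, hi⟩, rfl⟩
  · have : (f ^ i) x = 0 := by
      rw [← Nat.sub_add_cancel (not_lt.1 hi), pow_add, Module.End.mul_apply, hx, map_zero]
    simp only [this, SetLike.mem_coe, zero_mem]

theorem LinearIndependent.exists_dual_apply_eq {K V ι : Type*} [Field K] [AddCommGroup V]
    [Module K V] {v : ι → V} (hv : LinearIndependent K v) (c : ι → K) :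
    ∃ φ : Dual K V, ∀ i, φ (v i) = c i := by
  obtain ⟨φ, hφ⟩ := ((Basis.span hv).constr K c).exists_extend
  refine ⟨φ, fun i => ?_⟩
  have h := congr($hφ (Basis.span hv i))
  rwa [Basis.constr_basis, LinearMap.comp_apply, Submodule.subtype_apply, Basis.span_apply] at h

namespace LinearMap.BilinForm

section Duality

variable {R M ι : Type*} [CommRing R] [AddCommGroup M] [Module R M]
  {σ : LinearMap.BilinForm R M} {a b : ι → M}

theorem apply_eq_zero_of_mem_span (haa : ∀ i j, σ (a i) (a j) = 0) {v : M}
    (hv : v ∈ span R (Set.range a)) (j : ι) : σ v (a j) = 0 :=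
  (span_le (p := LinearMap.ker (σ.flip (a j))).2 (by rintro _ ⟨i, rfl⟩; exact haa i j) hv :)

variable [DecidableEq ι]

theorem linearIndependent_of_apply_eq_ite [Nontrivial R]
    (hba : ∀ i j, σ (b i) (a j) = if i = j then 1 else 0) : LinearIndependent R b :=
  .of_pairwise_dual_eq_zero_one b (fun j => σ.flip (a j))
    (fun j i hji => by simp [hba, Ne.symm hji]) (fun j => by simp [hba])

theorem eq_zero_of_mem_span_of_forall_apply_eq_zero [Fintype ι]
    (hba : ∀ i j, σ (b i) (a j) = if i = j then 1 else 0) {v : M} (hv : v ∈ span R (Set.range b))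
    (h : ∀ j, σ v (a j) = 0) : v = 0 := by
  obtain ⟨c, rfl⟩ := (mem_span_range_iff_exists_fun R).1 hv
  have hc : ∀ j, c j = 0 := fun j => by simpa [hba] using h j
  simp [hc]

theorem span_inf_span_eq_bot [Fintype ι] (haa : ∀ i j, σ (a i) (a j) = 0)
    (hba : ∀ i j, σ (b i) (a j) = if i = j then 1 else 0) :
    span R (Set.range a) ⊓ span R (Set.range b) = ⊥ :=
  eq_bot_iff.2 fun _ ⟨hva, hvb⟩ =>
    eq_zero_of_mem_span_of_forall_apply_eq_zero hba hvb (apply_eq_zero_of_mem_span haa hva)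

end Duality

section Field

variable {K V : Type*} [Field K] [AddCommGroup V] [Module K V] {σ : LinearMap.BilinForm K V}

theorem IsAlt.apply_map_self_eq_zero (hσ : σ.IsAlt) (h2 : (2 : K) ≠ 0)
    {g : Module.End K V} (hg : σ.IsSelfAdjoint g) (x : V) : σ x (g x) = 0 := by
  have h : σ x (g x) = -σ x (g x) := (hg x x).symm.trans (hσ.neg_eq _ _).symm
  exact (mul_eq_zero.1 (by linear_combination h : (2 : K) * σ x (g x) = 0)).resolve_left h2

theorem IsAlt.apply_pow_apply_pow_self_eq_zero (hσ : σ.IsAlt) (h2 : (2 : K) ≠ 0)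
    {f : Module.End K V} (hf : σ.IsSelfAdjoint f) (x : V) (a b : ℕ) :
    σ ((f ^ a) x) ((f ^ b) x) = 0 := by
  rw [hf.pow_s9 a, ← Module.End.mul_apply, ← pow_add]
  exact hσ.apply_map_self_eq_zero h2 (hf.pow_s9 _) x

theorem Nondegenerate.exists_apply_eq [FiniteDimensional K V] (hσ : σ.Nondegenerate)
    {ι : Type*} {v : ι → V} (hv : LinearIndependent K v) (c : ι → K) :
    ∃ w, ∀ i, σ w (v i) = c i := by
  obtain ⟨φ, hφ⟩ := hv.exists_dual_apply_eq c
  exact ⟨(σ.toDual hσ).symm φ, fun i => by rw [apply_toDual_symm_apply, hφ]⟩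

variable {ι : Type*} [Fintype ι] [DecidableEq ι] {a b : ι → V}

theorem isSymplecticSubspace_span_sup_span (hσ : σ.IsRefl)
    (haa : ∀ i j, σ (a i) (a j) = 0) (hba : ∀ i j, σ (b i) (a j) = if i = j then 1 else 0) :
    IsSymplecticSubspace σ (span K (Set.range a) ⊔ span K (Set.range b)) := by
  intro v hv hperp
  obtain ⟨x, hx, y, hy, rfl⟩ := mem_sup.1 hv
  have hy0 : y = 0 := eq_zero_of_mem_span_of_forall_apply_eq_zero hba hy fun j => by
    have h := hperp (a j) (mem_sup_left (subset_span ⟨j, rfl⟩))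
    rwa [map_add, LinearMap.add_apply, apply_eq_zero_of_mem_span haa hx, zero_add] at h
  subst hy0
  have hab : ∀ i j, σ.flip (a i) (b j) = if i = j then 1 else 0 := fun i j => by
    rw [flip_apply, hba]
    exact if_congr eq_comm rfl rfl
  refine (add_zero x).trans (eq_zero_of_mem_span_of_forall_apply_eq_zero hab hx fun j => ?_)
  rw [flip_apply]
  exact hσ.eq_zero (by simpa using hperp (b j) (mem_sup_right (subset_span ⟨j, rfl⟩)))

end Field

end LinearMap.BilinForm

open LinearMap.BilinForm in
theorem cyclic_subspace_symplectic_complement_general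
    {K V : Type*} [Field K] [AddCommGroup V] [Module K V] [FiniteDimensional K V]
    (hchar : (2 : K) ≠ 0)
    (σ : LinearMap.BilinForm K V) (halt : ∀ v, σ v v = 0) (hnd : σ.Nondegenerate)
    (f : Module.End K V) (hsa : ∀ v w, σ v (f w) = σ (f v) w)
    (d : ℕ) (hfd : f ^ d = 0)
    (u : V) (U : Submodule K V)
    (hU : U = Submodule.span K (Set.range fun i : ℕ => (f ^ i) u))
    (hdimU : Module.finrank K U = d) :
    ∃ w₀ : V, ∃ W : Submodule K V,
      W = Submodule.span K (Set.range fun i : ℕ => (f ^ i) w₀) ∧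
      Module.finrank K W = d ∧
      U ⊓ W = ⊥ ∧
      IsSymplecticSubspace σ (U ⊔ W) ∧
      (∀ i j : Fin d,
        σ ((f ^ (d - 1 - (i : ℕ))) u) ((f ^ (d - 1 - (j : ℕ))) u) = 0) ∧
      (∀ i j : Fin d, σ ((f ^ (i : ℕ)) w₀) ((f ^ (j : ℕ)) w₀) = 0) ∧
      (∀ i j : Fin d,
        σ ((f ^ (i : ℕ)) w₀) ((f ^ (d - 1 - (j : ℕ))) u) = if i = j then 1 else 0) := by
  have hσ : σ.IsAlt := halt
  have hf : σ.IsSelfAdjoint f := fun v w => (hsa v w).symm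
  have hpow_zero : ∀ x, (f ^ d) x = 0 := fun x => by rw [hfd, LinearMap.zero_apply]
  set g : Fin d → V := fun i => (f ^ (i : ℕ)) u
  have hUg : U = span K (Set.range g) :=
    hU.trans (span_range_pow_apply_eq_span_fin (hpow_zero u))
  have hg : LinearIndependent K g := linearIndependent_iff_card_eq_finrank_span.2 <| by
    rw [Fintype.card_fin, Set.finrank, ← hUg, hdimU]
  obtain ⟨w₀, hw₀⟩ := hnd.exists_apply_eq hg fun i => if (i : ℕ) + 1 = d then 1 else 0
  have hw₀_pow : ∀ n : ℕ, σ w₀ ((f ^ n) u) = if n + 1 = d then 1 else 0 := fun n => by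
    by_cases hn : n < d
    · exact hw₀ ⟨n, hn⟩
    · rw [pow_eq_zero_of_le (not_lt.1 hn) hfd, LinearMap.zero_apply, map_zero, if_neg (by omega)]
  set a : Fin d → V := fun i => (f ^ (d - 1 - (i : ℕ))) u
  set b : Fin d → V := fun i => (f ^ (i : ℕ)) w₀
  have hba : ∀ i j, σ (b i) (a j) = if i = j then 1 else 0 := fun i j => by
    rw [hf.pow_s9, ← Module.End.mul_apply, ← pow_add, hw₀_pow]
    exact if_congr (by omega) rfl rfl
  have haa : ∀ i j, σ (a i) (a j) = 0 := fun i j =>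
    hσ.apply_pow_apply_pow_self_eq_zero hchar hf u _ _
  have hUa : U = span K (Set.range a) := by
    rw [hUg, ← Fin.revPerm.surjective.range_comp g]
    congr! 3
    funext i
    change (f ^ (Fin.rev i : ℕ)) u = (f ^ (d - 1 - (i : ℕ))) u
    rw [Fin.val_rev, Nat.sub_sub, add_comm]
  have hW : span K (Set.range fun i : ℕ => (f ^ i) w₀) = span K (Set.range b) :=
    span_range_pow_apply_eq_span_fin (hpow_zero w₀)
  refine ⟨w₀, _, rfl, ?_, ?_, ?_, haa,
    fun i j => hσ.apply_pow_apply_pow_self_eq_zero hchar hf w₀ _ _, hba⟩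
  · rw [hW, finrank_span_eq_card (linearIndependent_of_apply_eq_ite hba), Fintype.card_fin]
  · rw [hUa, hW]
    exact span_inf_span_eq_bot haa hba
  · rw [hUa, hW]
    exact isSymplecticSubspace_span_sup_span hσ.isRefl haa hba

theorem cyclic_subspace_symplectic_complement
    {K V : Type*} [Field K] [AddCommGroup V] [Module K V] [FiniteDimensional K V]
    (hchar : (2 : K) ≠ 0)
    (σ : LinearMap.BilinForm K V) (halt : ∀ v, σ v v = 0) (hnd : σ.Nondegenerate)
    (f : Module.End K V) (hsa : ∀ v w, σ v (f w) = σ (f v) w)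
    (d : ℕ) (hd : 0 < d) (hfd : f ^ d = 0) (hfd' : f ^ (d - 1) ≠ 0)
    (u : V) (U : Submodule K V)
    (hU : U = Submodule.span K (Set.range fun i : ℕ => (f ^ i) u))
    (hdimU : Module.finrank K U = d) :
    ∃ w₀ : V, ∃ W : Submodule K V,
      W = Submodule.span K (Set.range fun i : ℕ => (f ^ i) w₀) ∧
      Module.finrank K W = d ∧
      U ⊓ W = ⊥ ∧
      IsSymplecticSubspace σ (U ⊔ W) ∧
      (∀ i j : Fin d,
        σ ((f ^ (d - 1 - (i : ℕ))) u) ((f ^ (d - 1 - (j : ℕ))) u) = 0) ∧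
      (∀ i j : Fin d, σ ((f ^ (i : ℕ)) w₀) ((f ^ (j : ℕ)) w₀) = 0) ∧
      (∀ i j : Fin d,
        σ ((f ^ (i : ℕ)) w₀) ((f ^ (d - 1 - (j : ℕ))) u) = if i = j then 1 else 0) :=
  cyclic_subspace_symplectic_complement_general hchar σ halt hnd f hsa d hfd u U hU hdimU
end

section
/- Let K be a field of characteristic ≠ 2, (V, σ) a symplectic K-vector space of dimension 2n, and f : V → V a nilpotent self-adjoint operator. Then there exists a Darboux basis {u₁,…,u_n, w₁,…,w_n} of V such that the matrix of f with respect to this basis is block-diagonal of the form [[B, 0],[0, Bᵀ]] for some n×n matrix B over K in Jordan normal form. -/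
/-- A Darboux basis: `σ(uᵢ,uⱼ)=0`, `σ(wᵢ,wⱼ)=0`, `σ(wᵢ,uⱼ)=δᵢⱼ`, where
`uᵢ = b (Sum.inl i)` and `wᵢ = b (Sum.inr i)`. -/
def IsDarbouxBasis {K V : Type*} [Field K] [AddCommGroup V] [Module K V] {n : ℕ}
    (σ : LinearMap.BilinForm K V) (b : Module.Basis (Fin n ⊕ Fin n) K V) : Prop :=
  (∀ i j, σ (b (Sum.inl i)) (b (Sum.inl j)) = 0) ∧
  (∀ i j, σ (b (Sum.inr i)) (b (Sum.inr j)) = 0) ∧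
  (∀ i j, σ (b (Sum.inr i)) (b (Sum.inl j)) = if i = j then 1 else 0)

/-- A square matrix is in Jordan normal form: it vanishes off the diagonal and
superdiagonal, each superdiagonal entry is `0` or `1`, and a superdiagonal `1`
only links equal diagonal entries (i.e. it lies inside a Jordan block). -/
def IsJordanNormalForm {n : ℕ} {K : Type*} [Field K]
    (B : Matrix (Fin n) (Fin n) K) : Prop :=
  (∀ i j : Fin n, (j : ℕ) ≠ (i : ℕ) → (j : ℕ) ≠ (i : ℕ) + 1 → B i j = 0) ∧
  (∀ i j : Fin n, (j : ℕ) = (i : ℕ) + 1 → B i j = 0 ∨ (B i j = 1 ∧ B i i = B j j))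


/-!
Induction on `n`. If `f ^ (m + 1) = 0 ≠ f ^ m`, pick `u` with `f ^ m u ≠ 0`; nondegeneracy and a
triangular correction give `w` with `σ (f ^ i u) w = δ_{i m}`. The chains `uᵢ = f ^ (m - i) u` and
`wᵢ = -f ^ i w` form a Darboux family: each chain is isotropic because `σ x (g x) = 0` for every
self-adjoint `g` when `σ` is alternating and `2 ≠ 0`. On their span `W`, `f` is a nilpotent Jordan
block `J` on the `u`'s and `Jᵀ` on the `w`'s. `W` is symplectic, so its `σ`-orthogonal complement
is an `f`-invariant symplectic space of dimension `2 (n - m - 1)`, and the Jordan blocks of the two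
pieces are concatenated.
-/

open Module LinearMap Set
open scoped Matrix

namespace Matrix

variable {ι ι' κ κ' R : Type*}

theorem fromBlocks_submatrix_sumCongr (A : Matrix ι ι R) (B : Matrix ι ι' R) (C : Matrix ι' ι R)
    (D : Matrix ι' ι' R) (e : κ ≃ ι) (e' : κ' ≃ ι') :
    (fromBlocks A B C D).submatrix (Equiv.sumCongr e e') (Equiv.sumCongr e e') =
      fromBlocks (A.submatrix e e) (B.submatrix e e') (C.submatrix e' e) (D.submatrix e' e') := by
  ext (i | i) (j | j) <;> rfl

theorem fromBlocks_zero_submatrix_sumSumSumComm [Zero R] (A₁ D₁ : Matrix ι ι R)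
    (A₂ D₂ : Matrix ι' ι' R) :
    (fromBlocks (fromBlocks A₁ 0 0 D₁) 0 0 (fromBlocks A₂ 0 0 D₂)).submatrix
        (Equiv.sumSumSumComm ι ι' ι ι') (Equiv.sumSumSumComm ι ι' ι ι') =
      fromBlocks (fromBlocks A₁ 0 0 A₂) 0 0 (fromBlocks D₁ 0 0 D₂) := by
  ext ((i | i) | (i | i)) ((j | j) | (j | j)) <;> rfl

end Matrix

section DarbouxFamily

variable {R M ι κ : Type*} [CommRing R] [AddCommGroup M] [Module R M]
  [DecidableEq ι] [DecidableEq κ] {σ : LinearMap.BilinForm R M}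

def IsDarbouxFamily (σ : LinearMap.BilinForm R M) (v : ι ⊕ ι → M) : Prop :=
  (∀ i j, σ (v (.inl i)) (v (.inl j)) = 0) ∧ (∀ i j, σ (v (.inr i)) (v (.inr j)) = 0) ∧
    ∀ i j, σ (v (.inr i)) (v (.inl j)) = if i = j then 1 else 0

namespace IsDarbouxFamily

variable {v : ι ⊕ ι → M}

theorem sum_smul_apply_inl [Fintype ι] (h : IsDarbouxFamily σ v) (c : ι ⊕ ι → R) (j : ι) :
    σ (∑ x, c x • v x) (v (.inl j)) = c (.inr j) := by
  simp [Fintype.sum_sum_type, h.1, h.2.2]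

theorem apply_inr_sum_smul [Fintype ι] (h : IsDarbouxFamily σ v) (c : ι ⊕ ι → R) (j : ι) :
    σ (v (.inr j)) (∑ x, c x • v x) = c (.inl j) := by
  simp [Fintype.sum_sum_type, h.2.1, h.2.2]

theorem linearIndependent [Fintype ι] (h : IsDarbouxFamily σ v) : LinearIndependent R v := by
  refine Fintype.linearIndependent_iff.2 fun c hc x => ?_
  rcases x with j | j
  · simpa [hc] using (h.apply_inr_sum_smul c j).symm
  · simpa [hc] using (h.sum_smul_apply_inl c j).symm

theorem nondegenerate_restrict_span [Fintype ι] (hσ : σ.IsRefl) (h : IsDarbouxFamily σ v) :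
    (σ.restrict (Submodule.span R (range v))).Nondegenerate := by
  refine (IsRefl.nondegenerate_iff_separatingLeft (B := σ.restrict _) fun x y => hσ x y).2
    fun x hx => ?_
  obtain ⟨c, hc⟩ := (Submodule.mem_span_range_iff_exists_fun R).1 x.2
  have hv : ∀ y, σ x (v y) = 0 := fun y => hx ⟨v y, Submodule.subset_span ⟨y, rfl⟩⟩
  have hc0 : c = 0 := by
    ext (j | j)
    · rw [← h.apply_inr_sum_smul c j, hc]; exact hσ _ _ (hv _)
    · rw [← h.sum_smul_apply_inl c j, hc]; exact hv _
  ext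
  simp [← hc, hc0]

theorem comp_sumCongr (h : IsDarbouxFamily σ v) (e : κ ≃ ι) :
    IsDarbouxFamily σ (v ∘ Equiv.sumCongr e e) :=
  ⟨fun i j => h.1 (e i) (e j), fun i j => h.2.1 (e i) (e j), fun i j => by
    simpa using h.2.2 (e i) (e j)⟩

theorem sumElim_comp_sumSumSumComm (hσ : σ.IsRefl) (h : IsDarbouxFamily σ v)
    {v' : κ ⊕ κ → M} (h' : IsDarbouxFamily σ v') (horth : ∀ x y, σ (v x) (v' y) = 0) :
    IsDarbouxFamily σ (Sum.elim v v' ∘ Equiv.sumSumSumComm ι κ ι κ) := by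
  have horth' : ∀ x y, σ (v' y) (v x) = 0 := fun x y => hσ _ _ (horth x y)
  refine ⟨?_, ?_, ?_⟩ <;> rintro (i | i) (j | j) <;>
    simp [Equiv.sumSumSumComm, h.1, h.2.1, h.2.2, h'.1, h'.2.1, h'.2.2, horth, horth']

end IsDarbouxFamily

end DarbouxFamily

section ActsByMatrix

variable {R M ι κ : Type*} [CommRing R] [AddCommGroup M] [Module R M] [Fintype ι] [Fintype κ]
  {f : Module.End R M}

def ActsByMatrix (f : Module.End R M) (v : ι → M) (A : Matrix ι ι R) : Prop :=
  ∀ j, f (v j) = ∑ i, A i j • v i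

namespace ActsByMatrix

variable {v : ι → M} {A : Matrix ι ι R}

theorem toMatrix_eq [DecidableEq ι] {b : Basis ι R M} (h : ActsByMatrix f b A) :
    LinearMap.toMatrix b b f = A := by
  ext i j
  rw [LinearMap.toMatrix_apply, h j, b.repr_sum_self]

theorem comp_equiv (h : ActsByMatrix f v A) (e : κ ≃ ι) :
    ActsByMatrix f (v ∘ e) (A.submatrix e e) := fun j => by
  simpa using (h (e j)).trans (e.sum_comp fun i => A i (e j) • v i).symm

theorem sumElim (h : ActsByMatrix f v A) {v' : κ → M} {A' : Matrix κ κ R}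
    (h' : ActsByMatrix f v' A') : ActsByMatrix f (Sum.elim v v') (Matrix.fromBlocks A 0 0 A') := by
  rintro (j | j)
  · simpa [Fintype.sum_sum_type] using h j
  · simpa [Fintype.sum_sum_type] using h' j

theorem neg (h : ActsByMatrix f v A) : ActsByMatrix f (-v) A := fun j => by
  simp [h j]

theorem mapsTo_span (h : ActsByMatrix f v A) :
    MapsTo f (Submodule.span R (range v)) (Submodule.span R (range v)) := by
  refine fun x hx => (Submodule.map_span_le f _ _).2 ?_ (Submodule.mem_map_of_mem hx)
  rintro _ ⟨j, rfl⟩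
  rw [h j]
  exact Submodule.sum_mem _ fun i _ => Submodule.smul_mem _ _ (Submodule.subset_span ⟨i, rfl⟩)

theorem of_restrict {p : Submodule R M} {hp : MapsTo f p p} {v : ι → p}
    (h : ActsByMatrix (f.restrict hp) v A) : ActsByMatrix f (fun i => (v i : M)) A := fun j =>
  (congrArg Subtype.val (h j)).trans (by simp)

end ActsByMatrix

end ActsByMatrix

section JordanBlock

variable {K R : Type*} [Field K] [Zero R] [One R]

def nilpotentJordanBlock (k : ℕ) : Matrix (Fin k) (Fin k) R :=
  Matrix.of fun i j => if (j : ℕ) = i + 1 then 1 else 0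

theorem isJordanNormalForm_nilpotentJordanBlock (k : ℕ) :
    IsJordanNormalForm (nilpotentJordanBlock k : Matrix (Fin k) (Fin k) K) :=
  ⟨fun i j _ hj => by simp [nilpotentJordanBlock, hj],
    fun i j hj => .inr ⟨by simp [nilpotentJordanBlock, hj], by simp [nilpotentJordanBlock]⟩⟩

theorem nilpotentJordanBlock_transpose_submatrix_revPerm (k : ℕ) :
    (nilpotentJordanBlock k : Matrix (Fin k) (Fin k) R)ᵀ.submatrix Fin.revPerm Fin.revPerm =
      nilpotentJordanBlock k := by
  ext i j
  simp only [nilpotentJordanBlock, Matrix.submatrix_apply, Matrix.transpose_apply,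
    Matrix.of_apply, Fin.revPerm_apply, Fin.val_rev]
  congr 1
  apply propext
  omega

theorem isJordanNormalForm_fromBlocks_submatrix {k l : ℕ} {B : Matrix (Fin k) (Fin k) K}
    {B' : Matrix (Fin l) (Fin l) K} (hB : IsJordanNormalForm B) (hB' : IsJordanNormalForm B') :
    IsJordanNormalForm
      ((Matrix.fromBlocks B 0 0 B').submatrix finSumFinEquiv.symm finSumFinEquiv.symm) := by
  refine ⟨fun i j => ?_, fun i j => ?_⟩ <;>
    induction i using Fin.addCases <;> induction j using Fin.addCases <;> simp
  · exact hB.1 _ _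
  · intro h₁ h₂; exact hB'.1 _ _ (by omega) (by omega)
  · exact hB.2 _ _
  · intro h; exact hB'.2 _ _ (by omega)

end JordanBlock

section AdjointPair

variable {R M : Type*} [CommRing R] [AddCommGroup M] [Module R M] {σ : LinearMap.BilinForm R M}
  {f : Module.End R M}

theorem LinearMap.IsAdjointPair.pow (hf : IsAdjointPair σ σ f f) (k : ℕ) :
    IsAdjointPair σ σ ⇑(f ^ k) ⇑(f ^ k) := by
  induction k with
  | zero => exact isAdjointPair_one
  | succ k ih =>
    have := ih.mul hf
    rwa [← pow_succ, ← pow_succ'] at this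

theorem LinearMap.IsAdjointPair.apply_pow_apply_pow (hf : IsAdjointPair σ σ f f) (i j : ℕ)
    (x y : M) : σ ((f ^ i) x) ((f ^ j) y) = σ ((f ^ (i + j)) x) y := by
  rw [← hf.pow j, ← Module.End.mul_apply, ← pow_add, add_comm]

theorem LinearMap.IsAdjointPair.mapsTo_orthogonal (hf : IsAdjointPair σ σ f f)
    {W : Submodule R M} (hW : MapsTo f W W) : MapsTo f (σ.orthogonal W) (σ.orthogonal W) :=
  fun y hy x hx => (hf x y).symm.trans (hy (f x) (hW hx))

end AdjointPair

section AlternatingForm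

variable {K V : Type*} [Field K] [AddCommGroup V] [Module K V] {σ : LinearMap.BilinForm K V}
  {f : Module.End K V}

theorem LinearMap.BilinForm.IsAlt.apply_self_eq_zero_of_isAdjointPair (hσ : σ.IsAlt)
    (h2 : (2 : K) ≠ 0) {g : Module.End K V} (hg : IsAdjointPair σ σ g g) (x : V) :
    σ (g x) x = 0 := by
  have h : (2 : K) * σ (g x) x = 0 := by linear_combination hg x x - hσ.neg_eq x (g x)
  exact (mul_eq_zero.1 h).resolve_left h2

theorem LinearMap.BilinForm.IsAlt.apply_pow_apply_pow_eq_zero (hσ : σ.IsAlt) (h2 : (2 : K) ≠ 0)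
    (hf : IsAdjointPair σ σ f f) (i j : ℕ) (x : V) : σ ((f ^ i) x) ((f ^ j) x) = 0 := by
  rw [hf.apply_pow_apply_pow]
  exact hσ.apply_self_eq_zero_of_isAdjointPair h2 (hf.pow _) x

theorem LinearMap.BilinForm.nondegenerate_restrict_orthogonal [FiniteDimensional K V]
    (hnd : σ.Nondegenerate) (hσ : σ.IsRefl) {W : Submodule K V}
    (hW : (σ.restrict W).Nondegenerate) :
    (σ.restrict (σ.orthogonal W)).Nondegenerate := by
  rw [restrict_nondegenerate_iff_isCompl_orthogonal hσ, orthogonal_orthogonal hnd hσ]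
  exact (isCompl_orthogonal_of_restrict_nondegenerate hσ hW).symm

end AlternatingForm

section JordanChain

theorem actsByMatrix_pow_apply {R M : Type*} [CommRing R] [AddCommGroup M] [Module R M]
    {f : Module.End R M} {k : ℕ} {y : M} (hy : (f ^ k) y = 0) :
    ActsByMatrix f (fun i : Fin k => (f ^ (i : ℕ)) y) (nilpotentJordanBlock k)ᵀ := fun j => by
  rw [← Module.End.mul_apply, ← pow_succ']
  simp only [Matrix.transpose_apply, nilpotentJordanBlock, Matrix.of_apply, ite_smul, one_smul,
    zero_smul]
  rw [Fin.sum_univ_eq_sum_range (fun p => if p = j + 1 then (f ^ p) y else 0) k,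
    Finset.sum_ite_eq']
  split_ifs with h
  · rfl
  · rw [show (j : ℕ) + 1 = k by simp at h; omega, hy]

variable {K V : Type*} [Field K] [AddCommGroup V] [Module K V] {σ : LinearMap.BilinForm K V}
  {f : Module.End K V}

theorem exists_apply_pow_eq_ite (hf : IsAdjointPair σ σ f f) {m : ℕ} (hfm : f ^ (m + 1) = 0)
    {u w₀ : V} (hw₀ : σ ((f ^ m) u) w₀ = 1) :
    ∃ w, ∀ i, σ ((f ^ i) u) w = if i = m then 1 else 0 := by
  suffices key : ∀ t, ∃ w, ∀ i, m ≤ i + t → σ ((f ^ i) u) w = if i = m then 1 else 0 by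
    obtain ⟨w, hw⟩ := key m
    exact ⟨w, fun i => hw i (by omega)⟩
  intro t
  induction t with
  | zero =>
    refine ⟨w₀, fun i hi => ?_⟩
    rcases (show m ≤ i by omega).eq_or_lt with rfl | hlt
    · simpa using hw₀
    · simp [pow_eq_zero_of_le hlt hfm, hlt.ne']
  | succ t ih =>
    -- kill the pairing with `f ^ (m - (t + 1)) u`; higher powers of `u` pair trivially with
    -- `f ^ (t + 1) w`, since they reach beyond `f ^ m`
    obtain ⟨w, hw⟩ := ih
    refine ⟨w - σ ((f ^ (m - (t + 1))) u) w • (f ^ (t + 1)) w, fun i hi => ?_⟩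
    rw [map_sub, map_smul, smul_eq_mul, hf.apply_pow_apply_pow, hw (i + (t + 1)) (by omega)]
    rcases Nat.lt_or_ge (i + t) m with hlt | hge
    · obtain rfl : i = m - (t + 1) := by omega
      simp [show m - (t + 1) + (t + 1) = m by omega, show m - (t + 1) ≠ m by omega]
    · rw [hw i hge, if_neg (show i + (t + 1) ≠ m by omega), mul_zero, sub_zero]

theorem exists_jordanChain_dual [Nontrivial V] (hnd : σ.Nondegenerate)
    (hf : IsAdjointPair σ σ f f) (hnil : IsNilpotent f) :
    ∃ m u w, f ^ (m + 1) = 0 ∧ ∀ i, σ ((f ^ i) u) w = if i = m then 1 else 0 := by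
  set m := nilpotencyClass f - 1
  have hfm : f ^ (m + 1) = 0 := by
    rw [Nat.sub_add_cancel (pos_nilpotencyClass_iff.2 hnil)]
    exact pow_nilpotencyClass hnil
  obtain ⟨u, hu⟩ : ∃ u, (f ^ m) u ≠ 0 :=
    not_forall.1 fun h => pow_pred_nilpotencyClass hnil (LinearMap.ext h)
  obtain ⟨w₀, hw₀⟩ : ∃ w₀, σ ((f ^ m) u) w₀ ≠ 0 := not_forall.1 fun h => hu (hnd.1 _ h)
  obtain ⟨w, hw⟩ := exists_apply_pow_eq_ite hf hfm (u := u) (w₀ := (σ ((f ^ m) u) w₀)⁻¹ • w₀)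
    (by simp [hw₀])
  exact ⟨m, u, w, hfm, hw⟩

def jordanChainPair (f : Module.End K V) (m : ℕ) (u w : V) : Fin (m + 1) ⊕ Fin (m + 1) → V :=
  Sum.elim (fun i => (f ^ (i.rev : ℕ)) u) (fun i => -(f ^ (i : ℕ)) w)

theorem isDarbouxFamily_jordanChainPair (hσ : σ.IsAlt) (h2 : (2 : K) ≠ 0)
    (hf : IsAdjointPair σ σ f f) {m : ℕ} {u w : V}
    (huw : ∀ i, σ ((f ^ i) u) w = if i = m then 1 else 0) :
    IsDarbouxFamily σ (jordanChainPair f m u w) := by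
  refine ⟨fun i j => hσ.apply_pow_apply_pow_eq_zero h2 hf _ _ u,
    fun i j => by simpa [jordanChainPair] using hσ.apply_pow_apply_pow_eq_zero h2 hf i j w,
    fun i j => ?_⟩
  simp only [jordanChainPair, Sum.elim_inl, Sum.elim_inr, map_neg, LinearMap.neg_apply,
    hσ.neg_eq]
  rw [hf.apply_pow_apply_pow, huw, Fin.val_rev]
  split_ifs with h₁ h₂ h₂ <;> simp_all [Fin.ext_iff] <;> omega

theorem actsByMatrix_jordanChainPair {m : ℕ} (hfm : f ^ (m + 1) = 0) (u w : V) :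
    ActsByMatrix f (jordanChainPair f m u w)
      (Matrix.fromBlocks (nilpotentJordanBlock (m + 1)) 0 0 (nilpotentJordanBlock (m + 1))ᵀ) := by
  have hu := (actsByMatrix_pow_apply (y := u) (by rw [hfm]; rfl)).comp_equiv Fin.revPerm
  rw [nilpotentJordanBlock_transpose_submatrix_revPerm] at hu
  exact hu.sumElim (actsByMatrix_pow_apply (y := w) (by rw [hfm]; rfl)).neg

end JordanChain

section JordanDarbouxFamily

variable {K V : Type*} [Field K] [AddCommGroup V] [Module K V] {σ : LinearMap.BilinForm K V}
  {f : Module.End K V}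

structure IsJordanDarbouxFamily (σ : LinearMap.BilinForm K V) (f : Module.End K V) {n : ℕ}
    (v : Fin n ⊕ Fin n → V) (B : Matrix (Fin n) (Fin n) K) : Prop where
  isDarbouxFamily : IsDarbouxFamily σ v
  isJordanNormalForm : IsJordanNormalForm B
  actsByMatrix : ActsByMatrix f v (Matrix.fromBlocks B 0 0 Bᵀ)

namespace IsJordanDarbouxFamily

variable {k l : ℕ} {v : Fin k ⊕ Fin k → V} {B : Matrix (Fin k) (Fin k) K}

theorem of_restrict {p : Submodule K V} {hp : MapsTo f p p} {v : Fin k ⊕ Fin k → p}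
    (h : IsJordanDarbouxFamily (σ.restrict p) (f.restrict hp) v B) :
    IsJordanDarbouxFamily σ f (fun x => (v x : V)) B :=
  ⟨h.isDarbouxFamily, h.isJordanNormalForm, h.actsByMatrix.of_restrict⟩

theorem append (hσ : σ.IsRefl) (h : IsJordanDarbouxFamily σ f v B) {v' : Fin l ⊕ Fin l → V}
    {B' : Matrix (Fin l) (Fin l) K} (h' : IsJordanDarbouxFamily σ f v' B')
    (horth : ∀ x y, σ (v x) (v' y) = 0) :
    IsJordanDarbouxFamily σ f
      (Sum.elim v v' ∘ Equiv.sumSumSumComm (Fin k) (Fin l) (Fin k) (Fin l) ∘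
        Equiv.sumCongr finSumFinEquiv.symm finSumFinEquiv.symm)
      ((Matrix.fromBlocks B 0 0 B').submatrix finSumFinEquiv.symm finSumFinEquiv.symm) := by
  refine ⟨((h.isDarbouxFamily.sumElim_comp_sumSumSumComm hσ h'.isDarbouxFamily horth).comp_sumCongr
      _), isJordanNormalForm_fromBlocks_submatrix h.isJordanNormalForm h'.isJordanNormalForm, ?_⟩
  have := ((h.actsByMatrix.sumElim h'.actsByMatrix).comp_equiv
    (Equiv.sumSumSumComm (Fin k) (Fin l) (Fin k) (Fin l))).comp_equiv
    (Equiv.sumCongr finSumFinEquiv.symm finSumFinEquiv.symm)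
  rw [Matrix.fromBlocks_zero_submatrix_sumSumSumComm, Matrix.fromBlocks_submatrix_sumCongr]
    at this
  simp only [Matrix.submatrix_zero, Pi.zero_apply] at this
  rwa [Matrix.transpose_submatrix, Matrix.fromBlocks_transpose, Matrix.transpose_zero]

theorem exists_basis (h : IsJordanDarbouxFamily σ f v B) [FiniteDimensional K V]
    (hdim : finrank K V = 2 * k) :
    ∃ b : Basis (Fin k ⊕ Fin k) K V, IsDarbouxBasis σ b ∧
      ∃ B : Matrix (Fin k) (Fin k) K, IsJordanNormalForm B ∧
        LinearMap.toMatrix b b f = Matrix.fromBlocks B 0 0 Bᵀ := by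
  let b := basisOfLinearIndependentOfCardEqFinrank' v h.isDarbouxFamily.linearIndependent
    (by simp [hdim, two_mul])
  have hb : ⇑b = v := coe_basisOfLinearIndependentOfCardEqFinrank' ..
  have hbD : IsDarbouxFamily σ b := hb ▸ h.isDarbouxFamily
  have hbf : ActsByMatrix f b (Matrix.fromBlocks B 0 0 Bᵀ) := hb ▸ h.actsByMatrix
  exact ⟨b, hbD, B, h.isJordanNormalForm, hbf.toMatrix_eq⟩

end IsJordanDarbouxFamily

theorem isJordanDarbouxFamily_jordanChainPair (hσ : σ.IsAlt) (h2 : (2 : K) ≠ 0)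
    (hf : IsAdjointPair σ σ f f) {m : ℕ} (hfm : f ^ (m + 1) = 0) {u w : V}
    (huw : ∀ i, σ ((f ^ i) u) w = if i = m then 1 else 0) :
    IsJordanDarbouxFamily σ f (jordanChainPair f m u w) (nilpotentJordanBlock (m + 1)) :=
  ⟨isDarbouxFamily_jordanChainPair hσ h2 hf huw, isJordanNormalForm_nilpotentJordanBlock _,
    actsByMatrix_jordanChainPair hfm u w⟩

end JordanDarbouxFamily

theorem exists_isJordanDarbouxFamily {K V : Type*} [Field K] [AddCommGroup V] [Module K V]
    [FiniteDimensional K V] (h2 : (2 : K) ≠ 0) {n : ℕ} (hdim : finrank K V = 2 * n)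
    {σ : LinearMap.BilinForm K V} (hσ : σ.IsAlt) (hnd : σ.Nondegenerate) {f : Module.End K V}
    (hf : IsAdjointPair σ σ f f) (hnil : IsNilpotent f) :
    ∃ (v : Fin n ⊕ Fin n → V) (B : Matrix (Fin n) (Fin n) K), IsJordanDarbouxFamily σ f v B := by
  induction n using Nat.strong_induction_on generalizing V with
  | _ n ih =>
  rcases n.eq_zero_or_pos with rfl | hn
  · exact ⟨isEmptyElim, 0, ⟨isEmptyElim, isEmptyElim, isEmptyElim⟩, ⟨isEmptyElim, isEmptyElim⟩,
      isEmptyElim⟩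
  have : Nontrivial V := Module.nontrivial_of_finrank_pos (R := K) (by omega)
  obtain ⟨m, u, w, hfm, huw⟩ := exists_jordanChain_dual hnd hf hnil
  have he := isJordanDarbouxFamily_jordanChainPair hσ h2 hf hfm huw
  set W := Submodule.span K (range (jordanChainPair f m u w))
  have hW : (σ.restrict W).Nondegenerate :=
    he.isDarbouxFamily.nondegenerate_restrict_span hσ.isRefl
  have hWσ : MapsTo f (σ.orthogonal W) (σ.orthogonal W) :=
    hf.mapsTo_orthogonal he.actsByMatrix.mapsTo_span
  have hdimW : finrank K W = 2 * (m + 1) := by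
    rw [finrank_span_eq_card he.isDarbouxFamily.linearIndependent]
    simp [two_mul]
  obtain ⟨l, rfl⟩ : ∃ l, n = m + 1 + l := ⟨n - (m + 1), by have := W.finrank_le; omega⟩
  obtain ⟨v', B', h'⟩ := ih l (by omega) (V := σ.orthogonal W) (σ := σ.restrict _)
    (f := f.restrict hWσ) (by rw [LinearMap.BilinForm.finrank_orthogonal hnd]; omega)
    (fun x => hσ x) (σ.nondegenerate_restrict_orthogonal hnd hσ.isRefl hW) (fun x y => hf x y)
    (Module.End.isNilpotent.restrict hWσ hnil)
  exact ⟨_, _, he.append hσ.isRefl h'.of_restrict fun x y =>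
    (v' y).2 _ (Submodule.subset_span ⟨x, rfl⟩)⟩

theorem nilpotent_selfAdjoint_jordan_pair_general
    {K V : Type*} [Field K] [AddCommGroup V] [Module K V] [FiniteDimensional K V]
    (hchar : (2 : K) ≠ 0) (n : ℕ)
    (hdim : Module.finrank K V = 2 * n)
    (σ : LinearMap.BilinForm K V) (halt : ∀ v, σ v v = 0) (hnd : σ.Nondegenerate)
    (f : Module.End K V) (hsa : ∀ v w, σ v (f w) = σ (f v) w)
    (hnil : IsNilpotent f) :
    ∃ b : Module.Basis (Fin n ⊕ Fin n) K V, IsDarbouxBasis σ b ∧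
      ∃ B : Matrix (Fin n) (Fin n) K, IsJordanNormalForm B ∧
        LinearMap.toMatrix b b f = Matrix.fromBlocks B 0 0 B.transpose := by
  obtain ⟨v, B, h⟩ :=
    exists_isJordanDarbouxFamily hchar hdim halt hnd (fun v w => (hsa v w).symm) hnil
  exact h.exists_basis hdim

theorem nilpotent_selfAdjoint_jordan_pair
    {K V : Type*} [Field K] [AddCommGroup V] [Module K V] [FiniteDimensional K V]
    (hchar : (2 : K) ≠ 0) (n : ℕ) (hn : 0 < n)
    (hdim : Module.finrank K V = 2 * n)
    (σ : LinearMap.BilinForm K V) (halt : ∀ v, σ v v = 0) (hnd : σ.Nondegenerate)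
    (f : Module.End K V) (hsa : ∀ v w, σ v (f w) = σ (f v) w)
    (hnil : IsNilpotent f) :
    ∃ b : Module.Basis (Fin n ⊕ Fin n) K V, IsDarbouxBasis σ b ∧
      ∃ B : Matrix (Fin n) (Fin n) K, IsJordanNormalForm B ∧
        LinearMap.toMatrix b b f = Matrix.fromBlocks B 0 0 B.transpose :=
  nilpotent_selfAdjoint_jordan_pair_general hchar n hdim σ halt hnd f hsa hnil
end
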